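/- Correctness of simple LL(1) parsing with derivatives: for every LL(1) syntax s : Syntax A (i.e. ¬HasConflict s), every token sequence ts and every value v : A, parse s ts = some v if and only if Matches s ts v. -/

import Mathlib

set_option autoImplicit false

/-- Context-free syntaxes (value-aware context-free expressions). -/
inductive Syn (Token Kind : Type) (Var : Type → Type) : Type → Type 1 where
  | elem (k : Kind) : Syn Token Kind Var Token
  | fail {A : Type} : Syn Token Kind Var A
  | eps {A : Type} (v : A) : Syn Token Kind Var A
  | disj {A : Type} (s₁ s₂ : Syn Token Kind Var A) : Syn Token Kind Var A
  | seqn {A B : Type} (s₁ : Syn Token Kind Var A) (s₂ : Syn Token Kind Var B) :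
      Syn Token Kind Var (A × B)
  | map {A B : Type} (f : A → B) (s : Syn Token Kind Var A) : Syn Token Kind Var B
  | var {A : Type} (x : Var A) : Syn Token Kind Var A

section

variable {Token Kind : Type} {Var : Type → Type}
variable (kd : Token → Kind) (env : ∀ A : Type, Var A → Syn Token Kind Var A)

/-- Semantics of syntaxes. -/
inductive Matches : ∀ {A : Type}, Syn Token Kind Var A → List Token → A → Prop where
  | elem {k : Kind} {t : Token} (h : kd t = k) : Matches (Syn.elem k) [t] t
  | eps {A : Type} (v : A) : Matches (Syn.eps v) [] v
  | disjL {A : Type} {s₁ s₂ : Syn Token Kind Var A} {ts : List Token} {v : A} :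
      Matches s₁ ts v → Matches (Syn.disj s₁ s₂) ts v
  | disjR {A : Type} {s₁ s₂ : Syn Token Kind Var A} {ts : List Token} {v : A} :
      Matches s₂ ts v → Matches (Syn.disj s₁ s₂) ts v
  | seqn {A B : Type} {s₁ : Syn Token Kind Var A} {s₂ : Syn Token Kind Var B}
      {ts₁ ts₂ : List Token} {v₁ : A} {v₂ : B} :
      Matches s₁ ts₁ v₁ → Matches s₂ ts₂ v₂ →
      Matches (Syn.seqn s₁ s₂) (ts₁ ++ ts₂) (v₁, v₂)
  | map {A B : Type} (f : A → B) {s : Syn Token Kind Var A} {ts : List Token} {v : A} :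
      Matches s ts v → Matches (Syn.map f s) ts (f v)
  | var {A : Type} (x : Var A) {ts : List Token} {v : A} :
      Matches (env A x) ts v → Matches (Syn.var x) ts v

/-- Productivity. -/
inductive Productive : ∀ {A : Type}, Syn Token Kind Var A → Prop where
  | eps {A : Type} (v : A) : Productive (Syn.eps v)
  | elem (k : Kind) : Productive (Syn.elem k)
  | disjL {A : Type} {s₁ s₂ : Syn Token Kind Var A} :
      Productive s₁ → Productive (Syn.disj s₁ s₂)
  | disjR {A : Type} {s₁ s₂ : Syn Token Kind Var A} :
      Productive s₂ → Productive (Syn.disj s₁ s₂)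
  | seqn {A B : Type} {s₁ : Syn Token Kind Var A} {s₂ : Syn Token Kind Var B} :
      Productive s₁ → Productive s₂ → Productive (Syn.seqn s₁ s₂)
  | map {A B : Type} (f : A → B) {s : Syn Token Kind Var A} :
      Productive s → Productive (Syn.map f s)
  | var {A : Type} (x : Var A) : Productive (env A x) → Productive (Syn.var x)

/-- Nullability, with associated value. -/
inductive Nullable : ∀ {A : Type}, Syn Token Kind Var A → A → Prop where
  | eps {A : Type} (v : A) : Nullable (Syn.eps v) v
  | disjL {A : Type} {s₁ s₂ : Syn Token Kind Var A} {v : A} :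
      Nullable s₁ v → Nullable (Syn.disj s₁ s₂) v
  | disjR {A : Type} {s₁ s₂ : Syn Token Kind Var A} {v : A} :
      Nullable s₂ v → Nullable (Syn.disj s₁ s₂) v
  | seqn {A B : Type} {s₁ : Syn Token Kind Var A} {s₂ : Syn Token Kind Var B} {v₁ : A} {v₂ : B} :
      Nullable s₁ v₁ → Nullable s₂ v₂ → Nullable (Syn.seqn s₁ s₂) (v₁, v₂)
  | map {A B : Type} (f : A → B) {s : Syn Token Kind Var A} {v : A} :
      Nullable s v → Nullable (Syn.map f s) (f v)
  | var {A : Type} (x : Var A) {v : A} : Nullable (env A x) v → Nullable (Syn.var x) v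

/-- First sets: `InFirst env k s` means `k ∈ First s`. -/
inductive InFirst : ∀ {A : Type}, Kind → Syn Token Kind Var A → Prop where
  | elem (k : Kind) : InFirst k (Syn.elem k)
  | disjL {A : Type} {k : Kind} {s₁ s₂ : Syn Token Kind Var A} :
      InFirst k s₁ → InFirst k (Syn.disj s₁ s₂)
  | disjR {A : Type} {k : Kind} {s₁ s₂ : Syn Token Kind Var A} :
      InFirst k s₂ → InFirst k (Syn.disj s₁ s₂)
  | seqnL {A B : Type} {k : Kind} {s₁ : Syn Token Kind Var A} {s₂ : Syn Token Kind Var B} :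
      InFirst k s₁ → Productive env s₂ → InFirst k (Syn.seqn s₁ s₂)
  | seqnR {A B : Type} {k : Kind} {s₁ : Syn Token Kind Var A} {s₂ : Syn Token Kind Var B}
      {v : A} : Nullable env s₁ v → InFirst k s₂ → InFirst k (Syn.seqn s₁ s₂)
  | map {A B : Type} {k : Kind} (f : A → B) {s : Syn Token Kind Var A} :
      InFirst k s → InFirst k (Syn.map f s)
  | var {A : Type} {k : Kind} (x : Var A) : InFirst k (env A x) → InFirst k (Syn.var x)

/-- Should-not-follow sets: `InSNF env k s` means `k ∈ ShouldNotFollow s`. -/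
inductive InSNF : ∀ {A : Type}, Kind → Syn Token Kind Var A → Prop where
  | disjL {A : Type} {k : Kind} {s₁ s₂ : Syn Token Kind Var A} :
      InSNF k s₁ → InSNF k (Syn.disj s₁ s₂)
  | disjR {A : Type} {k : Kind} {s₁ s₂ : Syn Token Kind Var A} :
      InSNF k s₂ → InSNF k (Syn.disj s₁ s₂)
  | disjFN {A : Type} {k : Kind} {s₁ s₂ : Syn Token Kind Var A} {v : A} :
      InFirst env k s₁ → Nullable env s₂ v → InSNF k (Syn.disj s₁ s₂)
  | disjNF {A : Type} {k : Kind} {s₁ s₂ : Syn Token Kind Var A} {v : A} :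
      Nullable env s₁ v → InFirst env k s₂ → InSNF k (Syn.disj s₁ s₂)
  | seqnL {A B : Type} {k : Kind} {s₁ : Syn Token Kind Var A} {s₂ : Syn Token Kind Var B}
      {v : B} : InSNF k s₁ → Nullable env s₂ v → InSNF k (Syn.seqn s₁ s₂)
  | seqnR {A B : Type} {k : Kind} {s₁ : Syn Token Kind Var A} {s₂ : Syn Token Kind Var B} :
      Productive env s₁ → InSNF k s₂ → InSNF k (Syn.seqn s₁ s₂)
  | map {A B : Type} {k : Kind} (f : A → B) {s : Syn Token Kind Var A} :
      InSNF k s → InSNF k (Syn.map f s)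
  | var {A : Type} {k : Kind} (x : Var A) : InSNF k (env A x) → InSNF k (Syn.var x)

/-- LL(1) conflicts. A syntax `s` is LL(1) iff `¬ HasConflict env s`. -/
inductive HasConflict : ∀ {A : Type}, Syn Token Kind Var A → Prop where
  | disjNN {A : Type} {s₁ s₂ : Syn Token Kind Var A} {v₁ v₂ : A} :
      Nullable env s₁ v₁ → Nullable env s₂ v₂ → HasConflict (Syn.disj s₁ s₂)
  | disjFF {A : Type} {s₁ s₂ : Syn Token Kind Var A} {k : Kind} :
      InFirst env k s₁ → InFirst env k s₂ → HasConflict (Syn.disj s₁ s₂)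
  | disjL {A : Type} {s₁ s₂ : Syn Token Kind Var A} :
      HasConflict s₁ → HasConflict (Syn.disj s₁ s₂)
  | disjR {A : Type} {s₁ s₂ : Syn Token Kind Var A} :
      HasConflict s₂ → HasConflict (Syn.disj s₁ s₂)
  | seqnSF {A B : Type} {s₁ : Syn Token Kind Var A} {s₂ : Syn Token Kind Var B} {k : Kind} :
      InSNF env k s₁ → InFirst env k s₂ → HasConflict (Syn.seqn s₁ s₂)
  | seqnL {A B : Type} {s₁ : Syn Token Kind Var A} {s₂ : Syn Token Kind Var B} :
      HasConflict s₁ → HasConflict (Syn.seqn s₁ s₂)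
  | seqnR {A B : Type} {s₁ : Syn Token Kind Var A} {s₂ : Syn Token Kind Var B} :
      HasConflict s₂ → HasConflict (Syn.seqn s₁ s₂)
  | map {A B : Type} (f : A → B) {s : Syn Token Kind Var A} :
      HasConflict s → HasConflict (Syn.map f s)
  | var {A : Type} (x : Var A) : HasConflict (env A x) → HasConflict (Syn.var x)

end

/-- Layers of a context, with above type `A` and below type `B`. -/
inductive Layer (Token Kind : Type) (Var : Type → Type) : Type → Type → Type 1 where
  | apply {A B : Type} (f : A → B) : Layer Token Kind Var A B
  | prepend {A C : Type} (v : C) : Layer Token Kind Var A (C × A)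
  | followBy {A C : Type} (s : Syn Token Kind Var C) : Layer Token Kind Var A (A × C)

/-- Type-aligned contexts (stacks of layers). -/
inductive Ctx (Token Kind : Type) (Var : Type → Type) : Type → Type → Type 1 where
  | nil {A : Type} : Ctx Token Kind Var A A
  | cons {A B C : Type} (l : Layer Token Kind Var A B) (c : Ctx Token Kind Var B C) :
      Ctx Token Kind Var A C

section

variable {Token Kind : Type} {Var : Type → Type}

def Ctx.isNil : ∀ {A B : Type}, Ctx Token Kind Var A B → Bool
  | _, _, Ctx.nil => true
  | _, _, Ctx.cons _ _ => false

/-- Unfocusing a focused syntax. -/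
def unfocus : ∀ {A B : Type}, Syn Token Kind Var A → Ctx Token Kind Var A B →
    Syn Token Kind Var B
  | _, _, s, Ctx.nil => s
  | _, _, s, Ctx.cons (Layer.apply f) c => unfocus (Syn.map f s) c
  | _, _, s, Ctx.cons (Layer.prepend v) c => unfocus (Syn.seqn (Syn.eps v) s) c
  | _, _, s, Ctx.cons (Layer.followBy s') c => unfocus (Syn.seqn s s') c

/-- Focused syntaxes with below type `B`. -/
def Focused (Token Kind : Type) (Var : Type → Type) (B : Type) : Type 1 :=
  (A : Type) × Syn Token Kind Var A × Ctx Token Kind Var A B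

def unfocusF {B : Type} (fs : Focused Token Kind Var B) : Syn Token Kind Var B :=
  unfocus fs.2.1 fs.2.2

def focusF {A : Type} (s : Syn Token Kind Var A) : Focused Token Kind Var A :=
  ⟨A, s, Ctx.nil⟩

/-- Plugging a value into a context. -/
def plug : ∀ {A B : Type}, A → Ctx Token Kind Var A B → Focused Token Kind Var B
  | A, _, v, Ctx.nil => ⟨A, Syn.eps v, Ctx.nil⟩
  | _, _, v, Ctx.cons (Layer.apply f) c => plug (f v) c
  | _, _, v, Ctx.cons (Layer.prepend v') c => plug (v', v) c
  | _, _, v, Ctx.cons (Layer.followBy s) c => ⟨_, s, Ctx.cons (Layer.prepend v) c⟩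

end

/-
The derivative of an LL(1) syntax is again LL(1) and satisfies
`Matches (δ t s) ts v ↔ Matches s (t :: ts) v`; together with `Matches s [] v ↔ Nullable s v`
this gives the theorem by induction on the token list. LL(1)-ness is what makes the choices
of `δ` the only ones a match can follow: a disjunction cannot start with the same kind on both
sides, and when `s₁` is nullable and `kd t ∈ First s₁`, then `kd t ∈ ShouldNotFollow s₁`, so `t`
cannot start `s₂` in `seqn s₁ s₂`. Since `ShouldNotFollow (δ t s) ⊆ ShouldNotFollow s`, no new
conflict arises in sequences.
-/

section

variable {Token Kind : Type} {Var : Type → Type}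

/- `cases` cannot invert a derivation about `Syn.seqn s₁ s₂`, as it would have to solve
`A × B = A' × B'`; the following shape-indexed predicates do that inversion instead. -/

def SeqnMatches (kd : Token → Kind) (env : ∀ A : Type, Var A → Syn Token Kind Var A) :
    ∀ {C : Type}, Syn Token Kind Var C → List Token → C → Prop
  | _, .seqn s₁ s₂, ts, v =>
      ∃ ts₁ ts₂, ts = ts₁ ++ ts₂ ∧ Matches kd env s₁ ts₁ v.1 ∧ Matches kd env s₂ ts₂ v.2
  | _, _, _, _ => True

def SeqnInFirst (env : ∀ A : Type, Var A → Syn Token Kind Var A) (k : Kind) :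
    ∀ {C : Type}, Syn Token Kind Var C → Prop
  | _, .seqn s₁ s₂ =>
      (InFirst env k s₁ ∧ Productive env s₂) ∨ ((∃ v, Nullable env s₁ v) ∧ InFirst env k s₂)
  | _, _ => True

def SeqnInSNF (env : ∀ A : Type, Var A → Syn Token Kind Var A) (k : Kind) :
    ∀ {C : Type}, Syn Token Kind Var C → Prop
  | _, .seqn s₁ s₂ =>
      (InSNF env k s₁ ∧ ∃ v, Nullable env s₂ v) ∨ (Productive env s₁ ∧ InSNF env k s₂)
  | _, _ => True

def SeqnHasConflict (env : ∀ A : Type, Var A → Syn Token Kind Var A) :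
    ∀ {C : Type}, Syn Token Kind Var C → Prop
  | _, .seqn s₁ s₂ =>
      (∃ k, InSNF env k s₁ ∧ InFirst env k s₂) ∨ HasConflict env s₁ ∨ HasConflict env s₂
  | _, _ => True

variable {kd : Token → Kind} {env : ∀ A : Type, Var A → Syn Token Kind Var A}

theorem matches_seqn_iff {A B : Type} {s₁ : Syn Token Kind Var A} {s₂ : Syn Token Kind Var B}
    {ts : List Token} {v : A × B} :
    Matches kd env (.seqn s₁ s₂) ts v ↔
      ∃ ts₁ ts₂, ts = ts₁ ++ ts₂ ∧ Matches kd env s₁ ts₁ v.1 ∧ Matches kd env s₂ ts₂ v.2 := by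
  refine ⟨fun h => ?_, fun ⟨_, _, hts, h₁, h₂⟩ => hts ▸ .seqn h₁ h₂⟩
  suffices ∀ {C} {s : Syn Token Kind Var C} {ts v},
      Matches kd env s ts v → SeqnMatches kd env s ts v from this h
  intro C s ts v h
  cases h <;> first | trivial | exact ⟨_, _, rfl, ‹_›, ‹_›⟩

theorem inFirst_seqn_iff {A B : Type} {s₁ : Syn Token Kind Var A} {s₂ : Syn Token Kind Var B}
    {k : Kind} :
    InFirst env k (.seqn s₁ s₂) ↔
      (InFirst env k s₁ ∧ Productive env s₂) ∨ ((∃ v, Nullable env s₁ v) ∧ InFirst env k s₂) := by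
  refine ⟨fun h => ?_, ?_⟩
  · suffices ∀ {C} {s : Syn Token Kind Var C}, InFirst env k s → SeqnInFirst env k s from this h
    intro C s h
    cases h with
    | seqnL h₁ h₂ => exact .inl ⟨h₁, h₂⟩
    | seqnR h₁ h₂ => exact .inr ⟨⟨_, h₁⟩, h₂⟩
    | _ => trivial
  · rintro (⟨h₁, h₂⟩ | ⟨⟨_, h₁⟩, h₂⟩)
    exacts [.seqnL h₁ h₂, .seqnR h₁ h₂]

theorem inSNF_seqn_iff {A B : Type} {s₁ : Syn Token Kind Var A} {s₂ : Syn Token Kind Var B}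
    {k : Kind} :
    InSNF env k (.seqn s₁ s₂) ↔
      (InSNF env k s₁ ∧ ∃ v, Nullable env s₂ v) ∨ (Productive env s₁ ∧ InSNF env k s₂) := by
  refine ⟨fun h => ?_, ?_⟩
  · suffices ∀ {C} {s : Syn Token Kind Var C}, InSNF env k s → SeqnInSNF env k s from this h
    intro C s h
    cases h with
    | seqnL h₁ h₂ => exact .inl ⟨h₁, _, h₂⟩
    | seqnR h₁ h₂ => exact .inr ⟨h₁, h₂⟩
    | _ => trivial
  · rintro (⟨h₁, _, h₂⟩ | ⟨h₁, h₂⟩)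
    exacts [.seqnL h₁ h₂, .seqnR h₁ h₂]

theorem hasConflict_seqn_iff {A B : Type} {s₁ : Syn Token Kind Var A}
    {s₂ : Syn Token Kind Var B} :
    HasConflict env (.seqn s₁ s₂) ↔
      (∃ k, InSNF env k s₁ ∧ InFirst env k s₂) ∨ HasConflict env s₁ ∨ HasConflict env s₂ := by
  refine ⟨fun h => ?_, ?_⟩
  · suffices ∀ {C} {s : Syn Token Kind Var C}, HasConflict env s → SeqnHasConflict env s
      from this h
    intro C s h
    cases h with
    | seqnSF h₁ h₂ => exact .inl ⟨_, h₁, h₂⟩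
    | seqnL h => exact .inr (.inl h)
    | seqnR h => exact .inr (.inr h)
    | _ => trivial
  · rintro (⟨_, h₁, h₂⟩ | h | h)
    exacts [.seqnSF h₁ h₂, .seqnL h, .seqnR h]

theorem Nullable.productive {A : Type} {s : Syn Token Kind Var A} {v : A}
    (h : Nullable env s v) : Productive env s := by
  induction h with
  | eps v => exact .eps v
  | disjL _ ih => exact .disjL ih
  | disjR _ ih => exact .disjR ih
  | seqn _ _ ih₁ ih₂ => exact .seqn ih₁ ih₂
  | map f _ ih => exact .map f ih
  | var x _ ih => exact .var x ih

theorem Matches.productive {A : Type} {s : Syn Token Kind Var A} {ts : List Token} {v : A}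
    (h : Matches kd env s ts v) : Productive env s := by
  induction h with
  | elem _ => exact .elem _
  | eps v => exact .eps v
  | disjL _ ih => exact .disjL ih
  | disjR _ ih => exact .disjR ih
  | seqn _ _ ih₁ ih₂ => exact .seqn ih₁ ih₂
  | map f _ ih => exact .map f ih
  | var x _ ih => exact .var x ih

theorem InFirst.productive {A : Type} {s : Syn Token Kind Var A} {k : Kind}
    (h : InFirst env k s) : Productive env s := by
  induction h with
  | elem k => exact .elem k
  | disjL _ ih => exact .disjL ih
  | disjR _ ih => exact .disjR ih
  | seqnL _ hp ih => exact .seqn ih hp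
  | seqnR hn _ ih => exact .seqn hn.productive ih
  | map f _ ih => exact .map f ih
  | var x _ ih => exact .var x ih

theorem Nullable.matches_nil {A : Type} {s : Syn Token Kind Var A} {v : A}
    (h : Nullable env s v) : Matches kd env s [] v := by
  induction h with
  | eps v => exact .eps v
  | disjL _ ih => exact .disjL ih
  | disjR _ ih => exact .disjR ih
  | seqn _ _ ih₁ ih₂ => exact .seqn ih₁ ih₂
  | map f _ ih => exact .map f ih
  | var x _ ih => exact .var x ih

theorem matches_nil_iff_nullable {A : Type} {s : Syn Token Kind Var A} {v : A} :
    Matches kd env s [] v ↔ Nullable env s v := by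
  refine ⟨fun h => ?_, Nullable.matches_nil⟩
  generalize hts : [] = ts at h
  induction h with
  | elem _ => cases hts
  | eps v => exact .eps v
  | disjL _ ih => exact .disjL (ih hts)
  | disjR _ ih => exact .disjR (ih hts)
  | seqn _ _ ih₁ ih₂ =>
      obtain ⟨h₁, h₂⟩ := List.append_eq_nil_iff.mp hts.symm
      exact .seqn (ih₁ h₁.symm) (ih₂ h₂.symm)
  | map f _ ih => exact .map f (ih hts)
  | var x _ ih => exact .var x (ih hts)

theorem Matches.inFirst_of_cons {A : Type} {s : Syn Token Kind Var A} {t : Token}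
    {ts : List Token} {v : A} (h : Matches kd env s (t :: ts) v) : InFirst env (kd t) s := by
  generalize hts : t :: ts = ts' at h
  induction h generalizing t ts with
  | elem hk =>
      cases hts
      exact hk ▸ .elem _
  | eps v => cases hts
  | disjL _ ih => exact .disjL (ih hts)
  | disjR _ ih => exact .disjR (ih hts)
  | seqn h₁ h₂ ih₁ ih₂ =>
      rename_i ts₁ _ _ _
      cases ts₁ with
      | nil => exact .seqnR (matches_nil_iff_nullable.mp h₁) (ih₂ hts)
      | cons t' ts' =>
          cases hts
          exact .seqnL (ih₁ rfl) h₂.productive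
  | map f _ ih => exact .map f (ih hts)
  | var x _ ih => exact .var x (ih hts)

theorem Nullable.inSNF_of_inFirst {A : Type} {s : Syn Token Kind Var A} {v : A} {k : Kind}
    (hs : ¬ HasConflict env s) (hn : Nullable env s v) (hf : InFirst env k s) :
    InSNF env k s := by
  induction hn with
  | eps v => nomatch hf
  | disjL hn₁ ih =>
      rcases hf with _ | hf₁ | hf₂
      · exact .disjL (ih (fun c => hs (.disjL c)) hf₁)
      · exact .disjNF hn₁ hf₂
  | disjR hn₂ ih =>
      rcases hf with _ | hf₁ | hf₂
      · exact .disjFN hf₁ hn₂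
      · exact .disjR (ih (fun c => hs (.disjR c)) hf₂)
  | seqn hn₁ hn₂ ih₁ ih₂ =>
      rcases inFirst_seqn_iff.mp hf with ⟨hf₁, _⟩ | ⟨_, hf₂⟩
      · exact .seqnL (ih₁ (fun c => hs (.seqnL c)) hf₁) hn₂
      · exact .seqnR hn₁.productive (ih₂ (fun c => hs (.seqnR c)) hf₂)
  | map f _ ih =>
      cases hf with
      | map _ hf => exact .map f (ih (fun c => hs (.map f c)) hf)
  | var x _ ih =>
      cases hf with
      | var _ hf => exact .var x (ih (fun c => hs (.var x c)) hf)

end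

section

variable {Token Kind : Type} {Var : Type → Type}

/-- `nullOpt` computes `nullable?` and `delta` satisfies the defining equations of the
derivative, which constrain `delta t s` only for LL(1) `s` with `kd t ∈ First s`. -/
structure IsDerivative (kd : Token → Kind) (env : ∀ A : Type, Var A → Syn Token Kind Var A)
    (nullOpt : ∀ {A : Type}, Syn Token Kind Var A → Option A)
    (delta : ∀ {A : Type}, Token → Syn Token Kind Var A → Syn Token Kind Var A) : Prop where
  nullOpt_eq_some_iff : ∀ {A : Type} (s : Syn Token Kind Var A), ¬ HasConflict env s →
    ∀ v : A, nullOpt s = some v ↔ Nullable env s v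
  elem : ∀ (t : Token) (k : Kind),
    ¬ HasConflict env (Syn.elem k : Syn Token Kind Var Token) →
    InFirst env (kd t) (Syn.elem k : Syn Token Kind Var Token) →
    delta t (Syn.elem k) = Syn.eps t
  disj_left : ∀ {A : Type} (t : Token) (s₁ s₂ : Syn Token Kind Var A),
    ¬ HasConflict env (Syn.disj s₁ s₂) → InFirst env (kd t) (Syn.disj s₁ s₂) →
    InFirst env (kd t) s₁ → delta t (Syn.disj s₁ s₂) = delta t s₁
  disj_right : ∀ {A : Type} (t : Token) (s₁ s₂ : Syn Token Kind Var A),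
    ¬ HasConflict env (Syn.disj s₁ s₂) → InFirst env (kd t) (Syn.disj s₁ s₂) →
    ¬ InFirst env (kd t) s₁ → delta t (Syn.disj s₁ s₂) = delta t s₂
  seqn_right : ∀ {A B : Type} (t : Token) (s₁ : Syn Token Kind Var A)
    (s₂ : Syn Token Kind Var B) (v : A),
    ¬ HasConflict env (Syn.seqn s₁ s₂) → InFirst env (kd t) (Syn.seqn s₁ s₂) →
    nullOpt s₁ = some v → InFirst env (kd t) s₂ →
    delta t (Syn.seqn s₁ s₂) = Syn.seqn (Syn.eps v) (delta t s₂)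
  seqn_left : ∀ {A B : Type} (t : Token) (s₁ : Syn Token Kind Var A)
    (s₂ : Syn Token Kind Var B),
    ¬ HasConflict env (Syn.seqn s₁ s₂) → InFirst env (kd t) (Syn.seqn s₁ s₂) →
    (∀ v : A, nullOpt s₁ = some v → ¬ InFirst env (kd t) s₂) →
    delta t (Syn.seqn s₁ s₂) = Syn.seqn (delta t s₁) s₂
  map : ∀ {A B : Type} (t : Token) (f : A → B) (s : Syn Token Kind Var A),
    ¬ HasConflict env (Syn.map f s) → InFirst env (kd t) (Syn.map f s) →
    delta t (Syn.map f s) = Syn.map f (delta t s)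
  var : ∀ {A : Type} (t : Token) (x : Var A),
    ¬ HasConflict env (Syn.var x : Syn Token Kind Var A) →
    InFirst env (kd t) (Syn.var x : Syn Token Kind Var A) →
    delta t (Syn.var x) = delta t (env A x)

namespace IsDerivative

variable {kd : Token → Kind} {env : ∀ A : Type, Var A → Syn Token Kind Var A}
  {nullOpt : ∀ {A : Type}, Syn Token Kind Var A → Option A}
  {delta : ∀ {A : Type}, Token → Syn Token Kind Var A → Syn Token Kind Var A}

theorem delta_disj_of_inFirst_right (hδ : IsDerivative kd env nullOpt delta) {A : Type}
    {s₁ s₂ : Syn Token Kind Var A} {t : Token} (hs : ¬ HasConflict env (.disj s₁ s₂))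
    (hf₂ : InFirst env (kd t) s₂) : delta t (.disj s₁ s₂) = delta t s₂ :=
  hδ.disj_right t s₁ s₂ hs (.disjR hf₂) fun hf₁ => hs (.disjFF hf₁ hf₂)

theorem delta_seqn_of_nullable (hδ : IsDerivative kd env nullOpt delta) {A B : Type}
    {s₁ : Syn Token Kind Var A} {s₂ : Syn Token Kind Var B} {t : Token} {v : A}
    (hs : ¬ HasConflict env (.seqn s₁ s₂)) (hn₁ : Nullable env s₁ v)
    (hf₂ : InFirst env (kd t) s₂) : delta t (.seqn s₁ s₂) = .seqn (.eps v) (delta t s₂) :=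
  hδ.seqn_right t s₁ s₂ v hs (.seqnR hn₁ hf₂)
    ((hδ.nullOpt_eq_some_iff s₁ (fun c => hs (.seqnL c)) v).mpr hn₁) hf₂

theorem delta_seqn_of_inFirst_left (hδ : IsDerivative kd env nullOpt delta) {A B : Type}
    {s₁ : Syn Token Kind Var A} {s₂ : Syn Token Kind Var B} {t : Token}
    (hs : ¬ HasConflict env (.seqn s₁ s₂)) (hf₁ : InFirst env (kd t) s₁)
    (hp₂ : Productive env s₂) : delta t (.seqn s₁ s₂) = .seqn (delta t s₁) s₂ := by
  refine hδ.seqn_left t s₁ s₂ hs (.seqnL hf₁ hp₂) fun v hv hf₂ => hs (.seqnSF ?_ hf₂)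
  have hs₁ : ¬ HasConflict env s₁ := fun c => hs (.seqnL c)
  exact ((hδ.nullOpt_eq_some_iff s₁ hs₁ v).mp hv).inSNF_of_inFirst hs₁ hf₁

theorem inSNF_of_inSNF_delta (hδ : IsDerivative kd env nullOpt delta) {A : Type}
    {s : Syn Token Kind Var A} {t : Token} {k : Kind} (hs : ¬ HasConflict env s)
    (hf : InFirst env (kd t) s) (h : InSNF env k (delta t s)) : InSNF env k s := by
  generalize hk : kd t = k' at hf
  induction hf with
  | elem k' =>
      rw [hδ.elem t k' hs (hk ▸ .elem _)] at h
      nomatch h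
  | disjL hf₁ ih =>
      rw [hδ.disj_left t _ _ hs (.disjL (hk ▸ hf₁)) (hk ▸ hf₁)] at h
      exact .disjL (ih (fun c => hs (.disjL c)) h hk)
  | disjR hf₂ ih =>
      rw [hδ.delta_disj_of_inFirst_right hs (hk ▸ hf₂)] at h
      exact .disjR (ih (fun c => hs (.disjR c)) h hk)
  | seqnL hf₁ hp₂ ih =>
      rw [hδ.delta_seqn_of_inFirst_left hs (hk ▸ hf₁) hp₂] at h
      rcases inSNF_seqn_iff.mp h with ⟨h₁, _, hn₂⟩ | ⟨_, h₂⟩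
      · exact .seqnL (ih (fun c => hs (.seqnL c)) h₁ hk) hn₂
      · exact .seqnR hf₁.productive h₂
  | seqnR hn₁ hf₂ ih =>
      rw [hδ.delta_seqn_of_nullable hs hn₁ (hk ▸ hf₂)] at h
      rcases inSNF_seqn_iff.mp h with ⟨h₁, _⟩ | ⟨_, h₂⟩
      · nomatch h₁
      · exact .seqnR hn₁.productive (ih (fun c => hs (.seqnR c)) h₂ hk)
  | map f hf ih =>
      rw [hδ.map t f _ hs (.map f (hk ▸ hf))] at h
      cases h with
      | map _ h => exact .map f (ih (fun c => hs (.map f c)) h hk)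
  | var x hf ih =>
      rw [hδ.var t x hs (.var x (hk ▸ hf))] at h
      exact .var x (ih (fun c => hs (.var x c)) h hk)

theorem not_hasConflict_delta (hδ : IsDerivative kd env nullOpt delta) {A : Type}
    {s : Syn Token Kind Var A} {t : Token} (hs : ¬ HasConflict env s)
    (hf : InFirst env (kd t) s) : ¬ HasConflict env (delta t s) := by
  generalize hk : kd t = k at hf
  induction hf with
  | elem k =>
      rw [hδ.elem t k hs (hk ▸ .elem _)]
      nofun
  | disjL hf₁ ih =>
      rw [hδ.disj_left t _ _ hs (.disjL (hk ▸ hf₁)) (hk ▸ hf₁)]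
      exact ih (fun c => hs (.disjL c)) hk
  | disjR hf₂ ih =>
      rw [hδ.delta_disj_of_inFirst_right hs (hk ▸ hf₂)]
      exact ih (fun c => hs (.disjR c)) hk
  | seqnL hf₁ hp₂ ih =>
      have hs₁ : ¬ HasConflict env _ := fun c => hs (.seqnL c)
      rw [hδ.delta_seqn_of_inFirst_left hs (hk ▸ hf₁) hp₂, hasConflict_seqn_iff]
      rintro (⟨k', h₁, h₂⟩ | h | h)
      · exact hs (.seqnSF (hδ.inSNF_of_inSNF_delta hs₁ (hk ▸ hf₁) h₁) h₂)
      · exact ih hs₁ hk h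
      · exact hs (.seqnR h)
  | seqnR hn₁ hf₂ ih =>
      rw [hδ.delta_seqn_of_nullable hs hn₁ (hk ▸ hf₂), hasConflict_seqn_iff]
      rintro (⟨_, h₁, _⟩ | h | h)
      · nomatch h₁
      · nomatch h
      · exact ih (fun c => hs (.seqnR c)) hk h
  | map f hf ih =>
      rw [hδ.map t f _ hs (.map f (hk ▸ hf))]
      rintro (_ | _ | _ | _ | _ | _ | _ | ⟨_, h⟩)
      exact ih (fun c => hs (.map f c)) hk h
  | var x hf ih =>
      rw [hδ.var t x hs (.var x (hk ▸ hf))]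
      exact ih (fun c => hs (.var x c)) hk

theorem matches_of_matches_delta (hδ : IsDerivative kd env nullOpt delta) {A : Type}
    {s : Syn Token Kind Var A} {t : Token} {ts : List Token} {v : A}
    (hs : ¬ HasConflict env s) (hf : InFirst env (kd t) s)
    (h : Matches kd env (delta t s) ts v) : Matches kd env s (t :: ts) v := by
  generalize hk : kd t = k at hf
  induction hf generalizing ts with
  | elem k =>
      rw [hδ.elem t k hs (hk ▸ .elem _)] at h
      cases h
      exact .elem hk
  | disjL hf₁ ih =>
      rw [hδ.disj_left t _ _ hs (.disjL (hk ▸ hf₁)) (hk ▸ hf₁)] at h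
      exact .disjL (ih (fun c => hs (.disjL c)) h hk)
  | disjR hf₂ ih =>
      rw [hδ.delta_disj_of_inFirst_right hs (hk ▸ hf₂)] at h
      exact .disjR (ih (fun c => hs (.disjR c)) h hk)
  | seqnL hf₁ hp₂ ih =>
      rw [hδ.delta_seqn_of_inFirst_left hs (hk ▸ hf₁) hp₂] at h
      obtain ⟨ts₁, ts₂, rfl, h₁, h₂⟩ := matches_seqn_iff.mp h
      exact .seqn (ih (fun c => hs (.seqnL c)) h₁ hk) h₂
  | seqnR hn₁ hf₂ ih =>
      rw [hδ.delta_seqn_of_nullable hs hn₁ (hk ▸ hf₂)] at h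
      obtain ⟨ts₁, ts₂, rfl, h₁, h₂⟩ := matches_seqn_iff.mp h
      cases h₁
      exact .seqn hn₁.matches_nil (ih (fun c => hs (.seqnR c)) h₂ hk)
  | map f hf ih =>
      rw [hδ.map t f _ hs (.map f (hk ▸ hf))] at h
      cases h with
      | map _ h => exact .map f (ih (fun c => hs (.map f c)) h hk)
  | var x hf ih =>
      rw [hδ.var t x hs (.var x (hk ▸ hf))] at h
      exact .var x (ih (fun c => hs (.var x c)) h hk)

theorem matches_delta_of_matches (hδ : IsDerivative kd env nullOpt delta) {A : Type}
    {s : Syn Token Kind Var A} {t : Token} {ts : List Token} {v : A}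
    (hs : ¬ HasConflict env s) (h : Matches kd env s (t :: ts) v) :
    Matches kd env (delta t s) ts v := by
  generalize hts : t :: ts = ts' at h
  induction h generalizing t ts with
  | elem hk =>
      cases hts
      rw [hδ.elem _ _ hs (hk ▸ .elem _)]
      exact .eps _
  | eps v => cases hts
  | disjL h₁ ih =>
      have hf₁ := (hts ▸ h₁).inFirst_of_cons
      rw [hδ.disj_left t _ _ hs (.disjL hf₁) hf₁]
      exact ih (fun c => hs (.disjL c)) hts
  | disjR h₂ ih =>
      rw [hδ.delta_disj_of_inFirst_right hs (hts ▸ h₂).inFirst_of_cons]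
      exact ih (fun c => hs (.disjR c)) hts
  | seqn h₁ h₂ ih₁ ih₂ =>
      rename_i ts₁ _ _ _
      cases ts₁ with
      | nil =>
          rw [List.nil_append] at hts
          rw [hδ.delta_seqn_of_nullable hs (matches_nil_iff_nullable.mp h₁)
            (hts ▸ h₂).inFirst_of_cons]
          exact .seqn (.eps _) (ih₂ (fun c => hs (.seqnR c)) hts)
      | cons t' ts' =>
          cases hts
          rw [hδ.delta_seqn_of_inFirst_left hs h₁.inFirst_of_cons h₂.productive]
          exact .seqn (ih₁ (fun c => hs (.seqnL c)) rfl) h₂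
  | map f h ih =>
      rw [hδ.map t f _ hs (.map f (hts ▸ h).inFirst_of_cons)]
      exact .map f (ih (fun c => hs (.map f c)) hts)
  | var x h ih =>
      rw [hδ.var t x hs (.var x (hts ▸ h).inFirst_of_cons)]
      exact ih (fun c => hs (.var x c)) hts

theorem matches_delta_iff (hδ : IsDerivative kd env nullOpt delta) {A : Type}
    {s : Syn Token Kind Var A} {t : Token} {ts : List Token} {v : A}
    (hs : ¬ HasConflict env s) (hf : InFirst env (kd t) s) :
    Matches kd env (delta t s) ts v ↔ Matches kd env s (t :: ts) v :=
  ⟨hδ.matches_of_matches_delta hs hf, hδ.matches_delta_of_matches hs⟩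

end IsDerivative

end

section

variable {Token Kind : Type} {Var : Type → Type}
variable (kd : Token → Kind) (env : ∀ A : Type, Var A → Syn Token Kind Var A)

theorem simple_ll1_parse_correct
    (nullOpt : ∀ {A : Type}, Syn Token Kind Var A → Option A)
    (hnull : ∀ {A : Type} (s : Syn Token Kind Var A), ¬ HasConflict env s →
      ∀ v : A, nullOpt s = some v ↔ Nullable env s v)
    (delta : ∀ {A : Type}, Token → Syn Token Kind Var A → Syn Token Kind Var A)
    (hdelta_elem : ∀ (t : Token) (k : Kind),
      ¬ HasConflict env (Syn.elem k : Syn Token Kind Var Token) →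
      InFirst env (kd t) (Syn.elem k : Syn Token Kind Var Token) →
      delta t (Syn.elem k) = Syn.eps t)
    (hdelta_disj₁ : ∀ {A : Type} (t : Token) (s₁ s₂ : Syn Token Kind Var A),
      ¬ HasConflict env (Syn.disj s₁ s₂) → InFirst env (kd t) (Syn.disj s₁ s₂) →
      InFirst env (kd t) s₁ → delta t (Syn.disj s₁ s₂) = delta t s₁)
    (hdelta_disj₂ : ∀ {A : Type} (t : Token) (s₁ s₂ : Syn Token Kind Var A),
      ¬ HasConflict env (Syn.disj s₁ s₂) → InFirst env (kd t) (Syn.disj s₁ s₂) →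
      ¬ InFirst env (kd t) s₁ → delta t (Syn.disj s₁ s₂) = delta t s₂)
    (hdelta_seqn₁ : ∀ {A B : Type} (t : Token) (s₁ : Syn Token Kind Var A)
      (s₂ : Syn Token Kind Var B) (v : A),
      ¬ HasConflict env (Syn.seqn s₁ s₂) → InFirst env (kd t) (Syn.seqn s₁ s₂) →
      nullOpt s₁ = some v → InFirst env (kd t) s₂ →
      delta t (Syn.seqn s₁ s₂) = Syn.seqn (Syn.eps v) (delta t s₂))
    (hdelta_seqn₂ : ∀ {A B : Type} (t : Token) (s₁ : Syn Token Kind Var A)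
      (s₂ : Syn Token Kind Var B),
      ¬ HasConflict env (Syn.seqn s₁ s₂) → InFirst env (kd t) (Syn.seqn s₁ s₂) →
      (∀ v : A, nullOpt s₁ = some v → ¬ InFirst env (kd t) s₂) →
      delta t (Syn.seqn s₁ s₂) = Syn.seqn (delta t s₁) s₂)
    (hdelta_map : ∀ {A B : Type} (t : Token) (f : A → B) (s : Syn Token Kind Var A),
      ¬ HasConflict env (Syn.map f s) → InFirst env (kd t) (Syn.map f s) →
      delta t (Syn.map f s) = Syn.map f (delta t s))
    (hdelta_var : ∀ {A : Type} (t : Token) (x : Var A),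
      ¬ HasConflict env (Syn.var x : Syn Token Kind Var A) →
      InFirst env (kd t) (Syn.var x : Syn Token Kind Var A) →
      delta t (Syn.var x) = delta t (env A x))
    (parse : ∀ {A : Type}, Syn Token Kind Var A → List Token → Option A)
    (hparse_nil : ∀ {A : Type} (s : Syn Token Kind Var A), parse s [] = nullOpt s)
    (hparse_cons₁ : ∀ {A : Type} (s : Syn Token Kind Var A) (t : Token) (ts : List Token),
      InFirst env (kd t) s → parse s (t :: ts) = parse (delta t s) ts)
    (hparse_cons₂ : ∀ {A : Type} (s : Syn Token Kind Var A) (t : Token) (ts : List Token),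
      ¬ InFirst env (kd t) s → parse s (t :: ts) = none)
    {A : Type} (s : Syn Token Kind Var A) (hs : ¬ HasConflict env s)
    (ts : List Token) (v : A) :
    parse s ts = some v ↔ Matches kd env s ts v := by
  have hδ : IsDerivative kd env nullOpt delta := ⟨hnull, hdelta_elem, hdelta_disj₁, hdelta_disj₂,
    hdelta_seqn₁, hdelta_seqn₂, hdelta_map, hdelta_var⟩
  induction ts generalizing s with
  | nil => rw [hparse_nil, hnull s hs, matches_nil_iff_nullable]
  | cons t ts ih =>
      by_cases hf : InFirst env (kd t) s
      · rw [hparse_cons₁ s t ts hf]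
        exact (ih _ (hδ.not_hasConflict_delta hs hf)).trans (hδ.matches_delta_iff hs hf)
      · rw [hparse_cons₂ s t ts hf]
        exact iff_of_false nofun fun h => hf h.inFirst_of_cons

end
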